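/- Let S and A be measurable spaces, δ a real discount factor with 0 < δ < 1, K a Markov kernel from S × A to S, and r : S × A → ℝ a bounded measurable reward. Let π : S → A be a measurable stationary policy, and let V_π : S → ℝ be the unique bounded measurable solution of V_π(s) = (1 − δ)·r(s, π(s)) + δ·∫ V_π(s′) ∂K(s, π(s)). Then V_π(s) equals the expected discounted reward of π: V_π(s) = ∫ (∑_{t=0}^∞ δ^t·(1 − δ)·r(ω(t), π(ω(t)))) ∂P^π_s, where P^π_s is the Ionescu–Tulcea trajectory measure of the Markov chain started at s with transitions s′ ∼ K(s_t, π(s_t)). -/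

import Mathlib

/-!
The expected discounted return `W s = ∫ ∑' t, δ ^ t * (1 - δ) * r (ω t, π (ω t)) ∂Pπ s` is bounded
and measurable, and splitting off the first step of the trajectory with the one-step
disintegration of `Pπ` shows that it satisfies the same Bellman recursion as `Vπ`. The Bellman
operator is a `δ`-contraction for the sup norm, so `|Vπ - W| ≤ δ ^ n * M` for every `n`, whence
`Vπ = W`.
-/

open MeasureTheory ProbabilityTheory

/-- Prepending an initial state to a trajectory. -/
def prepend {S : Type*} (s : S) (ω : ℕ → S) : ℕ → S
  | 0 => s
  | n + 1 => ω n

open Filter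

lemma measurable_prepend {S : Type*} [MeasurableSpace S] (s : S) : Measurable (prepend s) := by
  refine measurable_pi_lambda _ fun n => ?_
  cases n with
  | zero => exact measurable_const
  | succ n => exact measurable_pi_apply n

section BoundedIntegral

variable {α : Type*} [MeasurableSpace α] {μ : Measure α} {f : α → ℝ} {C : ℝ}

lemma integrable_of_abs_le [IsFiniteMeasure μ] (hf : Measurable f) (hC : ∀ x, |f x| ≤ C) :
    Integrable f μ :=
  .of_bound hf.aestronglyMeasurable C
    (Eventually.of_forall fun x => (hC x).trans_eq' (Real.norm_eq_abs _))

lemma abs_integral_le_of_abs_le [IsProbabilityMeasure μ] (hC : ∀ x, |f x| ≤ C) :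
    |∫ x, f x ∂μ| ≤ C := by
  simpa using norm_integral_le_of_norm_le_const (μ := μ) (f := f)
    (Eventually.of_forall fun x => (hC x).trans_eq' (Real.norm_eq_abs _))

lemma integral_const_add_mul [IsProbabilityMeasure μ] (hf : Integrable f μ) (a b : ℝ) :
    ∫ x, (a + b * f x) ∂μ = a + b * ∫ x, f x ∂μ := by
  rw [integral_add (integrable_const a) (hf.const_mul b), integral_const, integral_const_mul]
  simp

end BoundedIntegral

section DiscountedReturn

variable {S : Type*} {δ C : ℝ} {f : S → ℝ}

noncomputable def discountedReturn (δ : ℝ) (f : S → ℝ) (ω : ℕ → S) : ℝ :=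
  ∑' t, δ ^ t * f (ω t)

lemma norm_pow_mul_le (hδ : 0 ≤ δ) (hf : ∀ s, |f s| ≤ C) (ω : ℕ → S) (t : ℕ) :
    ‖δ ^ t * f (ω t)‖ ≤ δ ^ t * C := by
  rw [Real.norm_eq_abs, abs_mul, abs_of_nonneg (pow_nonneg hδ t)]
  exact mul_le_mul_of_nonneg_left (hf _) (pow_nonneg hδ t)

lemma summable_pow_mul (hδ0 : 0 ≤ δ) (hδ1 : δ < 1) : Summable fun t : ℕ => δ ^ t * C :=
  (summable_geometric_of_lt_one hδ0 hδ1).mul_right C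

lemma summable_discountedReturn (hδ0 : 0 ≤ δ) (hδ1 : δ < 1) (hf : ∀ s, |f s| ≤ C)
    (ω : ℕ → S) : Summable fun t => δ ^ t * f (ω t) :=
  (summable_pow_mul hδ0 hδ1).of_norm_bounded (norm_pow_mul_le hδ0 hf ω)

lemma abs_discountedReturn_le (hδ0 : 0 ≤ δ) (hδ1 : δ < 1) (hf : ∀ s, |f s| ≤ C)
    (ω : ℕ → S) : |discountedReturn δ f ω| ≤ C / (1 - δ) :=
  calc |discountedReturn δ f ω| ≤ ∑' t, δ ^ t * C :=
        tsum_of_norm_bounded (summable_pow_mul hδ0 hδ1).hasSum (norm_pow_mul_le hδ0 hf ω)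
    _ = C / (1 - δ) := by
        rw [tsum_mul_right, tsum_geometric_of_lt_one hδ0 hδ1, div_eq_inv_mul]

lemma discountedReturn_prepend (hδ0 : 0 ≤ δ) (hδ1 : δ < 1) (hf : ∀ s, |f s| ≤ C)
    (s : S) (ω : ℕ → S) :
    discountedReturn δ f (prepend s ω) = f s + δ * discountedReturn δ f ω := by
  rw [discountedReturn, (summable_discountedReturn hδ0 hδ1 hf _).tsum_eq_zero_add,
    discountedReturn, ← tsum_mul_left]
  simp only [prepend, pow_zero, one_mul, pow_succ, mul_assoc, mul_left_comm δ]

lemma measurable_discountedReturn [MeasurableSpace S] (hδ0 : 0 ≤ δ) (hδ1 : δ < 1)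
    (hf_meas : Measurable f) (hf : ∀ s, |f s| ≤ C) : Measurable (discountedReturn δ f) := by
  refine measurable_of_tendsto_metrizable
    (f := fun n ω => ∑ t ∈ Finset.range n, δ ^ t * f (ω t)) (fun n => ?_) ?_
  · exact Finset.measurable_sum _ fun t _ => (hf_meas.comp (measurable_pi_apply t)).const_mul _
  · exact tendsto_pi_nhds.mpr fun ω =>
      (summable_discountedReturn hδ0 hδ1 hf ω).hasSum.tendsto_sum_nat

end DiscountedReturn

lemma eq_zero_of_abs_le_of_contracting {X : Type*} {D : X → ℝ} {δ M : ℝ} (hδ0 : 0 ≤ δ)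
    (hδ1 : δ < 1) (hM : ∀ x, |D x| ≤ M)
    (hcontract : ∀ c, (∀ x, |D x| ≤ c) → ∀ x, |D x| ≤ δ * c) : D = 0 := by
  have hpow : ∀ n : ℕ, ∀ x, |D x| ≤ δ ^ n * M := by
    intro n
    induction n with
    | zero => simpa using hM
    | succ n ih => simpa [pow_succ, mul_assoc, mul_left_comm δ] using hcontract _ ih
  have hlim : Tendsto (fun n : ℕ => δ ^ n * M) atTop (nhds 0) := by
    simpa using (tendsto_pow_atTop_nhds_zero_of_lt_one hδ0 hδ1).mul_const M
  funext x
  exact abs_nonpos_iff.mp (ge_of_tendsto' hlim fun n => hpow n x)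

section MarkovChain

variable {S : Type*} [MeasurableSpace S] {κ : Kernel S S} {P : Kernel S (ℕ → S)}
  {δ C : ℝ} {f : S → ℝ}

theorem eq_of_bellman [IsMarkovKernel κ] (hδ0 : 0 ≤ δ) (hδ1 : δ < 1) {c V W : S → ℝ}
    {CV CW : ℝ} (hV : Measurable V) (hV_bd : ∀ s, |V s| ≤ CV) (hW : Measurable W)
    (hW_bd : ∀ s, |W s| ≤ CW) (hV_eq : ∀ s, V s = c s + δ * ∫ s', V s' ∂κ s)
    (hW_eq : ∀ s, W s = c s + δ * ∫ s', W s' ∂κ s) : V = W := by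
  have hdiff : ∀ s, V s - W s = δ * ∫ s', (V - W) s' ∂κ s := fun s => by
    rw [Pi.sub_def, integral_sub (integrable_of_abs_le hV hV_bd)
      (integrable_of_abs_le hW hW_bd), hV_eq, hW_eq]
    ring
  refine sub_eq_zero.mp (eq_zero_of_abs_le_of_contracting hδ0 hδ1 (M := CV + CW) ?_ ?_)
  · exact fun s => (abs_sub _ _).trans (add_le_add (hV_bd s) (hW_bd s))
  · intro c' hc' s
    rw [Pi.sub_apply, hdiff, abs_mul, abs_of_nonneg hδ0]
    exact mul_le_mul_of_nonneg_left (abs_integral_le_of_abs_le hc') hδ0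

lemma integral_eq_integral_integral_prepend
    (hP : ∀ s, P s = (κ s).bind fun s₁ => (P s₁).map (prepend s)) {F : (ℕ → S) → ℝ}
    (hF : Measurable F) {s : S} (hFi : Integrable F (P s)) :
    ∫ ω, F ω ∂P s = ∫ s₁, ∫ ω, F (prepend s ω) ∂P s₁ ∂κ s := by
  have hcomp : P s = (P.map (prepend s) ∘ₖ κ) s := by
    rw [Kernel.comp_apply, hP s]
    congr with s₁ : 1
    rw [Kernel.map_apply _ (measurable_prepend s)]
  rw [hcomp] at hFi ⊢
  rw [Kernel.integral_comp hFi]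
  congr with s₁
  rw [Kernel.map_apply _ (measurable_prepend s),
    integral_map (measurable_prepend s).aemeasurable hF.aestronglyMeasurable]

noncomputable def expectedReturn (P : Kernel S (ℕ → S)) (δ : ℝ) (f : S → ℝ) (s : S) : ℝ :=
  ∫ ω, discountedReturn δ f ω ∂P s

lemma measurable_expectedReturn (hδ0 : 0 ≤ δ) (hδ1 : δ < 1) (hf_meas : Measurable f)
    (hf : ∀ s, |f s| ≤ C) : Measurable (expectedReturn P δ f) :=
  (measurable_discountedReturn hδ0 hδ1 hf_meas hf).stronglyMeasurable.integral_kernel.measurable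

variable [IsMarkovKernel P]

lemma abs_expectedReturn_le (hδ0 : 0 ≤ δ) (hδ1 : δ < 1) (hf : ∀ s, |f s| ≤ C) (s : S) :
    |expectedReturn P δ f s| ≤ C / (1 - δ) :=
  abs_integral_le_of_abs_le (abs_discountedReturn_le hδ0 hδ1 hf)

theorem expectedReturn_bellman [IsMarkovKernel κ]
    (hP : ∀ s, P s = (κ s).bind fun s₁ => (P s₁).map (prepend s)) (hδ0 : 0 ≤ δ) (hδ1 : δ < 1)
    (hf_meas : Measurable f) (hf : ∀ s, |f s| ≤ C) (s : S) :
    expectedReturn P δ f s = f s + δ * ∫ s₁, expectedReturn P δ f s₁ ∂κ s := by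
  have hG := measurable_discountedReturn hδ0 hδ1 hf_meas hf
  have hG_int : ∀ s, Integrable (discountedReturn δ f) (P s) := fun s =>
    integrable_of_abs_le hG (abs_discountedReturn_le hδ0 hδ1 hf)
  calc expectedReturn P δ f s
      = ∫ s₁, ∫ ω, discountedReturn δ f (prepend s ω) ∂P s₁ ∂κ s :=
        integral_eq_integral_integral_prepend hP hG (hG_int s)
    _ = ∫ s₁, (f s + δ * expectedReturn P δ f s₁) ∂κ s := by
        refine integral_congr_ae (Eventually.of_forall fun s₁ => ?_)
        simp only [discountedReturn_prepend hδ0 hδ1 hf]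
        exact integral_const_add_mul (hG_int s₁) _ _
    _ = f s + δ * ∫ s₁, expectedReturn P δ f s₁ ∂κ s :=
        integral_const_add_mul (integrable_of_abs_le
          (measurable_expectedReturn hδ0 hδ1 hf_meas hf) (abs_expectedReturn_le hδ0 hδ1 hf)) _ _

end MarkovChain

/-- The unique bounded measurable solution `Vπ` of the Bellman recursion
`Vπ s = (1 - δ) * r (s, π s) + δ * ∫ Vπ ∂(K (s, π s))` equals the expected discounted reward
of the stationary policy `π`, i.e. the integral of `ω ↦ ∑' t, δ ^ t * (1 - δ) * r (ω t, π (ω t))`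
under the Ionescu–Tulcea trajectory measure `Pπ s` of the Markov chain with kernel
`s ↦ K (s, π s)` started at `s` (characterized as a Markov kernel satisfying the one-step
disintegration `Pπ s = (K (s, π s)).bind (fun s₁ => (Pπ s₁).map (prepend s))`). -/
theorem stationary_policy_value_eq_expected_discounted_reward
    {S A : Type*} [MeasurableSpace S] [MeasurableSpace A]
    (δ : ℝ) (hδ0 : 0 < δ) (hδ1 : δ < 1)
    (K : Kernel (S × A) S) [IsMarkovKernel K]
    (r : S × A → ℝ) (hr_meas : Measurable r) (hr_bd : ∃ C, ∀ p, |r p| ≤ C)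
    (π : S → A) (hπ_meas : Measurable π)
    (Pπ : S → Measure (ℕ → S)) (hP_meas : Measurable Pπ)
    (hP_prob : ∀ s, IsProbabilityMeasure (Pπ s))
    (hP_rec : ∀ s, Pπ s = (K (s, π s)).bind fun s₁ => (Pπ s₁).map (prepend s))
    (Vπ : S → ℝ) (hV_meas : Measurable Vπ) (hV_bd : ∃ C, ∀ s, |Vπ s| ≤ C)
    (hV_bellman : ∀ s, Vπ s = (1 - δ) * r (s, π s) + δ * ∫ s', Vπ s' ∂(K (s, π s))) :
    ∀ s, Vπ s = ∫ ω, (∑' t : ℕ, δ ^ t * (1 - δ) * r (ω t, π (ω t))) ∂(Pπ s) := by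
  obtain ⟨Cr, hCr⟩ := hr_bd
  obtain ⟨CV, hCV⟩ := hV_bd
  have hpolicy : Measurable fun s => (s, π s) := measurable_id.prodMk hπ_meas
  let κ : Kernel S S := K.comap _ hpolicy
  let P : Kernel S (ℕ → S) := ⟨Pπ, hP_meas⟩
  have : IsMarkovKernel P := ⟨hP_prob⟩
  let f : S → ℝ := fun s => (1 - δ) * r (s, π s)
  have hf_meas : Measurable f := (hr_meas.comp hpolicy).const_mul _
  have hf_bd : ∀ s, |f s| ≤ (1 - δ) * Cr := fun s => by
    rw [abs_mul, abs_of_pos (sub_pos.mpr hδ1)]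
    exact mul_le_mul_of_nonneg_left (hCr _) (sub_pos.mpr hδ1).le
  have hVπ : Vπ = expectedReturn P δ f :=
    eq_of_bellman (κ := κ) hδ0.le hδ1 hV_meas hCV
      (measurable_expectedReturn hδ0.le hδ1 hf_meas hf_bd)
      (abs_expectedReturn_le hδ0.le hδ1 hf_bd) hV_bellman
      (expectedReturn_bellman hP_rec hδ0.le hδ1 hf_meas hf_bd)
  intro s
  simp only [hVπ, expectedReturn, discountedReturn, f, P, mul_assoc]
  rfl
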